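/- For all positive integers k, the k-th Bernoulli number satisfies 2(1-2^k)B_k = (-1)^k * k * ∑_{m=1}^{k} (-1)^m * (m-1)! / 2^{m-1} * S(k,m). -/

import Mathlib

/-!
Let `F_n(a) = ∑ₘ m! aᵐ S(n, m)` (`fubini a n`) be the Fubini polynomials; their exponential
generating function is `1 / (1 - a (eˣ - 1))`. After an index shift, the sum in the theorem is
`-∑ₘ m! (-1/2)ᵐ S(k, m + 1)`, which by `S(n + 1, m + 1) = ∑ᵢ C(n, i) S(i, m)` is minus the
binomial transform of `F(-1/2)` at `k - 1`. At `a = -1/2` the generating function is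
`G(x) = 2 / (eˣ + 1)`. The symmetry `G(-x) = eˣ G(x)` identifies that binomial transform with
`(-1)^(k-1) F_{k-1}(-1/2)`, and `x G(x) = 2 B(x) - 2 B(2x)` with `B(x) = x / (eˣ - 1)` gives
`2 (1 - 2ᵏ) B_k = k F_{k-1}(-1/2)`.
-/

/-- Stirling numbers of the second kind. -/
def stirling2 : ℕ → ℕ → ℕ
  | 0, 0 => 1
  | 0, _ + 1 => 0
  | _ + 1, 0 => 0
  | n + 1, k + 1 => (k + 1) * stirling2 n (k + 1) + stirling2 n k

open Finset PowerSeries Nat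

theorem stirling2_eq_stirlingSecond : stirling2 = stirlingSecond := by
  funext n k
  induction n generalizing k with
  | zero => cases k <;> rfl
  | succ n ih => cases k <;> simp [stirling2, stirlingSecond_succ_succ, ih]

theorem Nat.stirlingSecond_succ_succ_eq_sum_choose (n m : ℕ) :
    stirlingSecond (n + 1) (m + 1) = ∑ i ∈ range (n + 1), n.choose i * stirlingSecond i m := by
  induction n generalizing m with
  | zero => cases m <;> rfl
  | succ n ih =>
    have shifted : ∑ i ∈ range (n + 1), n.choose i * stirlingSecond (i + 1) m
        = m * stirlingSecond (n + 1) (m + 1) + stirlingSecond (n + 1) m := by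
      rcases m with _ | m
      · simp
      · calc _ = ∑ i ∈ range (n + 1), ((m + 1) * (n.choose i * stirlingSecond i (m + 1))
                + n.choose i * stirlingSecond i m) := by
              refine sum_congr rfl fun i _ => ?_
              rw [stirlingSecond_succ_succ]
              ring
          _ = _ := by rw [sum_add_distrib, ← mul_sum, ← ih, ← ih]
    have unshifted : ∑ i ∈ range (n + 1), n.choose (i + 1) * stirlingSecond (i + 1) m
        + stirlingSecond 0 m = stirlingSecond (n + 1) (m + 1) := by
      rw [ih, sum_range_succ, choose_succ_self, zero_mul, add_zero,
        sum_range_succ' (fun i => n.choose i * stirlingSecond i m), choose_zero_right, one_mul]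
    rw [sum_range_succ', stirlingSecond_succ_succ]
    simp only [choose_succ_succ', add_mul, sum_add_distrib, shifted, choose_zero_right, one_mul]
    linarith

section Fubini

variable {R : Type*} [CommRing R]

def fubini (a : R) (n : ℕ) : R :=
  ∑ m ∈ range (n + 1), (m ! : R) * a ^ m * stirlingSecond n m

theorem fubini_eq_sum_range (a : R) {n N : ℕ} (h : n < N) :
    fubini a n = ∑ m ∈ range N, (m ! : R) * a ^ m * stirlingSecond n m :=
  sum_subset (range_subset_range.2 h) fun m _ hm => by
    rw [stirlingSecond_eq_zero_of_lt (by simpa using hm), cast_zero, mul_zero]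

theorem sum_choose_mul_fubini (a : R) (n : ℕ) :
    ∑ i ∈ range (n + 1), (n.choose i : R) * fubini a i
      = ∑ m ∈ range (n + 1), (m ! : R) * a ^ m * stirlingSecond (n + 1) (m + 1) := by
  calc _ = ∑ i ∈ range (n + 1), ∑ m ∈ range (n + 1),
        (m ! : R) * a ^ m * (n.choose i * stirlingSecond i m) := by
        refine sum_congr rfl fun i hi => ?_
        rw [fubini_eq_sum_range a (mem_range.1 hi), mul_sum]
        exact sum_congr rfl fun m _ => by ring
    _ = _ := by
        rw [sum_comm]
        refine sum_congr rfl fun m _ => ?_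
        rw [← mul_sum, stirlingSecond_succ_succ_eq_sum_choose]
        push_cast
        rfl

theorem mul_sum_choose_fubini_add (a : R) (n : ℕ) :
    a * ∑ i ∈ range (n + 1), (n.choose i : R) * fubini a i + (if n = 0 then 1 else 0)
      = (1 + a) * fubini a n := by
  have hS0 : ((stirlingSecond n 0 : ℕ) : R) = if n = 0 then 1 else 0 := by
    cases n <;> simp
  have expand : ∀ m ∈ range (n + 1),
      a * ((m ! : R) * a ^ m * stirlingSecond (n + 1) (m + 1))
        = ((m + 1) ! : R) * a ^ (m + 1) * stirlingSecond n (m + 1)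
          + a * ((m ! : R) * a ^ m * stirlingSecond n m) := fun m _ => by
    rw [stirlingSecond_succ_succ, factorial_succ]
    push_cast
    ring
  rw [sum_choose_mul_fubini, mul_sum, sum_congr rfl expand, sum_add_distrib, ← mul_sum, ← fubini,
    ← hS0, add_right_comm, add_mul, one_mul, fubini_eq_sum_range a (N := n + 2) (by omega),
    sum_range_succ' _ (n + 1)]
  simp only [factorial_zero, cast_one, pow_zero, mul_one, one_mul]

end Fubini

namespace PowerSeries

theorem coeff_mk_div_factorial_mul_exp (f : ℕ → ℚ) (n : ℕ) :
    coeff n (mk (fun i => f i / i !) * exp ℚ) = (∑ i ∈ range (n + 1), n.choose i * f i) / n ! := by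
  rw [coeff_mul, sum_antidiagonal_eq_sum_range_succ_mk, sum_div]
  refine sum_congr rfl fun i hi => ?_
  rw [coeff_mk, coeff_exp, cast_choose ℚ (mem_range_succ_iff.1 hi), Algebra.algebraMap_self,
    RingHom.id_apply]
  field_simp

theorem exp_add_one_ne_zero : exp ℚ + 1 ≠ 0 := fun h => by
  simpa using congrArg constantCoeff h

theorem exp_sub_one_ne_zero : exp ℚ - 1 ≠ 0 := fun h => by
  simpa using congrArg (coeff 1) h

end PowerSeries

def fubiniSeries (a : ℚ) : ℚ⟦X⟧ := mk fun n => fubini a n / n !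

theorem fubiniSeries_mul (a : ℚ) : fubiniSeries a * (1 - C a * (exp ℚ - 1)) = 1 := by
  have hexpand : fubiniSeries a * (1 - C a * (exp ℚ - 1))
      = C (1 + a) * fubiniSeries a - C a * (fubiniSeries a * exp ℚ) := by
    simp only [map_add, map_one]
    ring
  ext n
  rw [hexpand, map_sub, coeff_C_mul, coeff_C_mul, fubiniSeries, coeff_mk_div_factorial_mul_exp,
    coeff_mk, coeff_one, ← mul_div_assoc, ← mul_div_assoc, ← sub_div,
    ← mul_sum_choose_fubini_add, add_sub_cancel_left]
  split_ifs with hn <;> simp [hn]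

theorem fubiniSeries_neg_half_mul_exp_add_one : fubiniSeries (-1 / 2) * (exp ℚ + 1) = 2 := by
  have h := fubiniSeries_mul (-1 / 2)
  have hC : (2 : ℚ⟦X⟧) * C (-1 / 2) = -1 := by
    rw [← map_ofNat C 2, ← map_mul]
    norm_num
  linear_combination 2 * h + fubiniSeries (-1 / 2) * (exp ℚ - 1) * hC

theorem evalNegHom_fubiniSeries_neg_half :
    evalNegHom (fubiniSeries (-1 / 2)) = fubiniSeries (-1 / 2) * exp ℚ := by
  have hG := fubiniSeries_neg_half_mul_exp_add_one
  have hneg := congrArg evalNegHom hG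
  rw [map_mul, map_add, map_one, map_ofNat] at hneg
  refine mul_right_cancel₀ exp_add_one_ne_zero ?_
  linear_combination exp ℚ * hneg - exp ℚ * hG
    - evalNegHom (fubiniSeries (-1 / 2)) * exp_mul_exp_neg_eq_one (A := ℚ)

theorem neg_one_pow_mul_fubini_neg_half (n : ℕ) :
    (-1) ^ n * fubini (-1 / 2 : ℚ) n = ∑ i ∈ range (n + 1), (n.choose i : ℚ) * fubini (-1 / 2) i := by
  have h := congrArg (coeff n) evalNegHom_fubiniSeries_neg_half
  rw [evalNegHom, coeff_rescale, fubiniSeries, coeff_mk_div_factorial_mul_exp, coeff_mk] at h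
  have hfac : (n ! : ℚ) ≠ 0 := by positivity
  rwa [← mul_div_assoc, div_left_inj' hfac] at h

theorem bernoulliPowerSeries_sub_rescale_two :
    2 * (bernoulliPowerSeries ℚ - rescale 2 (bernoulliPowerSeries ℚ))
      = X * fubiniSeries (-1 / 2) := by
  set B := bernoulliPowerSeries ℚ
  have hB : B * (exp ℚ - 1) = X := bernoulliPowerSeries_mul_exp_sub_one ℚ
  have hB2 : rescale 2 B * (exp ℚ ^ 2 - 1) = 2 * X := by
    rw [exp_pow_eq_rescale_exp, cast_ofNat, ← map_one (rescale _), ← map_sub, ← map_mul, hB,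
      rescale_X, ← map_ofNat C 2]
  -- `(eˣ - 1) (eˣ + 1) = e²ˣ - 1` clears the denominators of `B(x)`, `B(2x)` and `G(x)`.
  refine mul_right_cancel₀ (mul_ne_zero exp_sub_one_ne_zero exp_add_one_ne_zero) ?_
  linear_combination 2 * (exp ℚ + 1) * hB - 2 * hB2
    - X * (exp ℚ - 1) * fubiniSeries_neg_half_mul_exp_add_one

theorem two_mul_one_sub_two_pow_mul_bernoulli_succ (n : ℕ) :
    2 * (1 - 2 ^ (n + 1)) * bernoulli (n + 1) = (n + 1) * fubini (-1 / 2 : ℚ) n := by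
  have h := congrArg (coeff (n + 1)) bernoulliPowerSeries_sub_rescale_two
  rw [← map_ofNat C 2, coeff_C_mul, map_sub, coeff_rescale, coeff_succ_X_mul, bernoulliPowerSeries,
    fubiniSeries, coeff_mk, coeff_mk, factorial_succ] at h
  simp only [Algebra.algebraMap_self, RingHom.id_apply] at h
  -- keeps `field_simp` from rewriting the argument `-1 / 2` on one side only
  generalize fubini (-1 / 2 : ℚ) n = F at h ⊢
  have hfac : (n ! : ℚ) ≠ 0 := by positivity
  push_cast at h
  field_simp at h
  linear_combination h

theorem sum_Icc_eq_neg_sum_range (n : ℕ) :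
    ∑ m ∈ Icc 1 (n + 1), (-1) ^ m * ((m - 1) ! : ℚ) / 2 ^ (m - 1) * stirlingSecond (n + 1) m
      = -∑ m ∈ range (n + 1), (m ! : ℚ) * (-1 / 2) ^ m * stirlingSecond (n + 1) (m + 1) := by
  rw [← Ico_add_one_right_eq_Icc, sum_Ico_eq_sum_range, add_tsub_cancel_right, ← sum_neg_distrib]
  refine sum_congr rfl fun m _ => ?_
  rw [add_comm 1 m, add_tsub_cancel_right, div_pow, pow_succ]
  ring

theorem two_mul_one_sub_two_pow_mul_bernoulli_general (k : ℕ) :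
    2 * (1 - 2 ^ k) * bernoulli k = (-1) ^ k * k * ∑ m ∈ Finset.Icc 1 k,
      (-1) ^ m * ((m - 1).factorial : ℚ) / 2 ^ (m - 1) * stirling2 k m := by
  rw [stirling2_eq_stirlingSecond]
  rcases k with _ | n
  · simp
  rw [sum_Icc_eq_neg_sum_range, ← sum_choose_mul_fubini, ← neg_one_pow_mul_fubini_neg_half,
    two_mul_one_sub_two_pow_mul_bernoulli_succ]
  have hsign : (-1 : ℚ) ^ n * (-1) ^ n = 1 := by rw [← mul_pow]; norm_num
  push_cast
  linear_combination -(n + 1) * fubini (-1 / 2 : ℚ) n * hsign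

/-- 2(1-2^k) B_k = (-1)^k k * sum_{m=1}^k (-1)^m (m-1)!/2^(m-1) S(k,m). -/
theorem two_mul_one_sub_two_pow_mul_bernoulli (k : ℕ) (hk : 1 ≤ k) :
    2 * (1 - 2 ^ k) * bernoulli k = (-1) ^ k * k * ∑ m ∈ Finset.Icc 1 k,
      (-1) ^ m * ((m - 1).factorial : ℚ) / 2 ^ (m - 1) * stirling2 k m :=
  two_mul_one_sub_two_pow_mul_bernoulli_general k
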